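/- If every clause of a CNF formula F is superirredundant in F, then F is a minimal-size formula: no CNF formula equivalent to F has strictly smaller size. -/

import Mathlib

/-!
Let `G` be an equivalent CNF without tautologies. Completeness of resolution (proved by
Davis–Putnam variable elimination) yields for each clause `g` of `G` a clause `f g ⊆ g` of
`ResCn F`. The formula `f(G) ⊆ ResCn F` is still equivalent to `F`, so every `c ∈ F` contains a
clause `d` derivable from `f(G)`. Superirredundance of `c` forces `d = c`, and then `c ∈ f(G)`,
since otherwise `c` would be a resolvent of two other clauses of `ResCn F`. Hence
`size F ≤ size f(G) ≤ size G`.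
-/

abbrev Lit : Type := ℕ × Bool
abbrev Clause : Type := Finset Lit
abbrev Cnf : Type := Finset Clause

def Lit.negate (l : Lit) : Lit := (l.1, !l.2)

def litSat (M : ℕ → Bool) (l : Lit) : Prop := M l.1 = l.2

def clauseSat (M : ℕ → Bool) (c : Clause) : Prop := ∃ l ∈ c, litSat M l

def cnfSat (M : ℕ → Bool) (F : Cnf) : Prop := ∀ c ∈ F, clauseSat M c

def ClTaut (c : Clause) : Prop := ∃ v : ℕ, (v, true) ∈ c ∧ (v, false) ∈ c

def cnfVars (F : Cnf) : Set ℕ := {v | ∃ c ∈ F, ∃ b, (v, b) ∈ c}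

def isResolvent (c1 c2 r : Clause) (v : ℕ) : Prop :=
  (v, true) ∈ c1 ∧ (v, false) ∈ c2 ∧
    r = c1.erase (v, true) ∪ c2.erase (v, false)

inductive Deriv (F : Set Clause) : Clause → Prop
  | base {c : Clause} : c ∈ F → Deriv F c
  | step {c1 c2 r : Clause} {v : ℕ} : Deriv F c1 → Deriv F c2 →
      isResolvent c1 c2 r v → ¬ ClTaut r → Deriv F r

def ResCn (F : Set Clause) : Set Clause := {c | Deriv F c}

def setSat (M : ℕ → Bool) (S : Set Clause) : Prop := ∀ c ∈ S, clauseSat M c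

def setEntails (S : Set Clause) (c : Clause) : Prop :=
  ∀ M, setSat M S → clauseSat M c

def superRedundant (F : Cnf) (c : Clause) : Prop :=
  setEntails (ResCn ↑F \ {c}) c

def cnfSize (F : Cnf) : ℕ := ∑ c ∈ F, c.card

def cnfEquiv (F G : Cnf) : Prop := ∀ M, cnfSat M F ↔ cnfSat M G

open Function

lemma clauseSat_mono {M : ℕ → Bool} {c d : Clause} (h : c ⊆ d) (hc : clauseSat M c) :
    clauseSat M d :=
  let ⟨l, hl, hsat⟩ := hc
  ⟨l, h hl, hsat⟩

lemma ClTaut.clauseSat {c : Clause} (h : ClTaut c) (M : ℕ → Bool) : clauseSat M c := by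
  obtain ⟨v, hvt, hvf⟩ := h
  cases hM : M v
  · exact ⟨(v, false), hvf, hM⟩
  · exact ⟨(v, true), hvt, hM⟩

lemma litSat_update_of_ne {M : ℕ → Bool} {v : ℕ} {b : Bool} {l : Lit} (h : l.1 ≠ v) :
    litSat (update M v b) l ↔ litSat M l := by
  rw [litSat, litSat, update_of_ne h]

lemma clauseSat_of_isResolvent {M : ℕ → Bool} {c₁ c₂ r : Clause} {v : ℕ}
    (h : isResolvent c₁ c₂ r v) (h₁ : clauseSat M c₁) (h₂ : clauseSat M c₂) :
    clauseSat M r := by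
  obtain ⟨hv₁, hv₂, rfl⟩ := h
  obtain ⟨l₁, hl₁, hs₁⟩ := h₁
  obtain ⟨l₂, hl₂, hs₂⟩ := h₂
  by_cases e₁ : l₁ = (v, true)
  · by_cases e₂ : l₂ = (v, false)
    · subst e₁ e₂
      simp_all [litSat]
    · exact ⟨l₂, Finset.mem_union_right _ (Finset.mem_erase.2 ⟨e₂, hl₂⟩), hs₂⟩
  · exact ⟨l₁, Finset.mem_union_left _ (Finset.mem_erase.2 ⟨e₁, hl₁⟩), hs₁⟩

namespace Deriv

variable {S T : Set Clause} {c : Clause}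

lemma clauseSat {M : ℕ → Bool} (h : Deriv S c) (hM : setSat M S) : clauseSat M c := by
  induction h with
  | base hc => exact hM _ hc
  | step _ _ hres _ ih₁ ih₂ => exact clauseSat_of_isResolvent hres ih₁ ih₂

lemma not_clTaut (h : Deriv S c) (hS : ∀ x ∈ S, ¬ ClTaut x) : ¬ ClTaut c := by
  cases h with
  | base hc => exact hS _ hc
  | step _ _ _ ht => exact ht

lemma of_subset_resCn (hST : S ⊆ ResCn T) (h : Deriv S c) : Deriv T c := by
  induction h with
  | base hc => exact hST hc
  | step _ _ hres ht ih₁ ih₂ => exact step ih₁ ih₂ hres ht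

end Deriv

section SuperRedundant

variable {F : Cnf}

lemma superRedundant_of_clTaut {c : Clause} (h : ClTaut c) : superRedundant F c :=
  fun M _ => h.clauseSat M

lemma not_clTaut_of_not_superRedundant (hirr : ∀ c ∈ F, ¬ superRedundant F c) :
    ∀ c ∈ F, ¬ ClTaut c :=
  fun c hc ht => hirr c hc (superRedundant_of_clTaut ht)

lemma superRedundant_of_subset {c d : Clause} (hd : d ∈ ResCn ↑F) (hdc : d ⊆ c)
    (hne : d ≠ c) : superRedundant F c :=
  fun _ hM => clauseSat_mono hdc (hM d ⟨hd, hne⟩)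

lemma superRedundant_of_isResolvent {c₁ c₂ r : Clause} {v : ℕ} (h₁ : c₁ ∈ ResCn ↑F)
    (h₂ : c₂ ∈ ResCn ↑F) (hne₁ : c₁ ≠ r) (hne₂ : c₂ ≠ r)
    (hres : isResolvent c₁ c₂ r v) : superRedundant F r :=
  fun _ hM =>
    clauseSat_of_isResolvent hres (hM c₁ ⟨h₁, hne₁⟩) (hM c₂ ⟨h₂, hne₂⟩)

lemma mem_of_deriv_of_not_superRedundant {S : Set Clause} (hS : S ⊆ ResCn ↑F) {c : Clause}
    (h : Deriv S c) (hc : ¬ superRedundant F c) : c ∈ S := by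
  induction h with
  | base h => exact h
  | @step c₁ c₂ r v h₁ h₂ hres _ ih₁ ih₂ =>
    by_cases e₁ : c₁ = r
    · exact e₁ ▸ ih₁ (e₁ ▸ hc)
    by_cases e₂ : c₂ = r
    · exact e₂ ▸ ih₂ (e₂ ▸ hc)
    exact absurd (superRedundant_of_isResolvent (h₁.of_subset_resCn hS)
      (h₂.of_subset_resCn hS) e₁ e₂ hres) hc

end SuperRedundant

section Completeness

def clauseVars (c : Clause) : Finset ℕ := c.image Prod.fst

def cnfVarFinset (G : Cnf) : Finset ℕ := G.biUnion clauseVars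

lemma mem_clauseVars {c : Clause} {v : ℕ} : v ∈ clauseVars c ↔ ∃ b, (v, b) ∈ c := by
  simp [clauseVars]

lemma mem_cnfVarFinset {G : Cnf} {v : ℕ} :
    v ∈ cnfVarFinset G ↔ ∃ g ∈ G, v ∈ clauseVars g := by
  simp [cnfVarFinset]

lemma clauseSat_update_iff {M : ℕ → Bool} {v : ℕ} {b : Bool} {c : Clause}
    (hv : v ∉ clauseVars c) : clauseSat (update M v b) c ↔ clauseSat M c := by
  refine exists_congr fun l => and_congr_right fun hl => litSat_update_of_ne fun he => hv ?_
  exact mem_clauseVars.2 ⟨l.2, he ▸ hl⟩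

def falsifier (c : Clause) (v : ℕ) : Bool := decide ((v, false) ∈ c)

lemma not_clauseSat_falsifier {c : Clause} (hc : ¬ ClTaut c) : ¬ clauseSat (falsifier c) c := by
  rintro ⟨⟨v, b⟩, hl, hsat⟩
  cases b
  · exact absurd hl (by simpa [litSat, falsifier] using hsat)
  · exact hc ⟨v, hl, by simpa [litSat, falsifier] using hsat⟩

lemma mem_of_not_litSat_falsifier {c : Clause} {l : Lit} (hl : l.1 ∈ clauseVars c)
    (hsat : ¬ litSat (falsifier c) l) : l ∈ c := by
  obtain ⟨v, b⟩ := l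
  obtain ⟨b', hb'⟩ := mem_clauseVars.1 hl
  cases b <;> cases b' <;> simp_all [litSat, falsifier]

lemma exists_mem_subset_of_setEntails {G : Cnf} {c : Clause} (hc : ¬ ClTaut c)
    (hvars : cnfVarFinset G ⊆ clauseVars c) (hent : setEntails ↑G c) :
    ∃ d ∈ G, d ⊆ c := by
  have : ¬ setSat (falsifier c) ↑G := fun h => not_clauseSat_falsifier hc (hent _ h)
  obtain ⟨d, hd, hdsat⟩ : ∃ d ∈ G, ¬ clauseSat (falsifier c) d := by
    simpa [setSat] using this
  refine ⟨d, hd, fun l hl => mem_of_not_litSat_falsifier ?_ fun hs => hdsat ⟨l, hl, hs⟩⟩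
  exact hvars (mem_cnfVarFinset.2 ⟨d, hd, mem_clauseVars.2 ⟨l.2, hl⟩⟩)

/-- Davis–Putnam elimination of the variable `v`. -/
noncomputable def resolveOn (v : ℕ) (G : Cnf) : Cnf := by
  classical exact
    G.filter (fun g => (v, true) ∉ g ∧ (v, false) ∉ g) ∪
      ((G.filter ((v, true) ∈ ·) ×ˢ G.filter ((v, false) ∈ ·)).image
        (fun p => p.1.erase (v, true) ∪ p.2.erase (v, false))).filter (¬ ClTaut ·)

variable {v : ℕ} {G : Cnf} {h : Clause}

lemma mem_resolveOn : h ∈ resolveOn v G ↔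
    (h ∈ G ∧ (v, true) ∉ h ∧ (v, false) ∉ h) ∨
      (∃ g₁ ∈ G, ∃ g₂ ∈ G, isResolvent g₁ g₂ h v) ∧ ¬ ClTaut h := by
  simp only [resolveOn, isResolvent, Finset.mem_union, Finset.mem_filter, Finset.mem_image,
    Finset.mem_product, Prod.exists]
  grind

lemma deriv_of_mem_resolveOn (hh : h ∈ resolveOn v G) : Deriv ↑G h := by
  rcases mem_resolveOn.1 hh with ⟨hG, -⟩ | ⟨⟨g₁, hg₁, g₂, hg₂, hres⟩, ht⟩
  · exact .base hG
  · exact .step (.base hg₁) (.base hg₂) hres ht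

lemma not_clTaut_of_mem_resolveOn (hG : ∀ g ∈ G, ¬ ClTaut g) (hh : h ∈ resolveOn v G) :
    ¬ ClTaut h :=
  (deriv_of_mem_resolveOn hh).not_clTaut hG

lemma cnfVarFinset_resolveOn_subset (hG : ∀ g ∈ G, ¬ ClTaut g) :
    cnfVarFinset (resolveOn v G) ⊆ (cnfVarFinset G).erase v := by
  intro w hw
  obtain ⟨h, hh, b, hb⟩ : ∃ h ∈ resolveOn v G, ∃ b, (w, b) ∈ h := by
    simpa [mem_cnfVarFinset, mem_clauseVars] using hw
  simp only [Finset.mem_erase, mem_cnfVarFinset, mem_clauseVars]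
  rcases mem_resolveOn.1 hh with
    ⟨hG', hvt, hvf⟩ | ⟨⟨g₁, hg₁, g₂, hg₂, hvt₁, hvf₂, rfl⟩, -⟩
  · refine ⟨?_, h, hG', b, hb⟩
    rintro rfl
    cases b <;> contradiction
  · rcases Finset.mem_union.1 hb with hb | hb <;> rw [Finset.mem_erase] at hb
    · refine ⟨?_, g₁, hg₁, b, hb.2⟩
      rintro rfl
      cases b
      · exact hG g₁ hg₁ ⟨w, hvt₁, hb.2⟩
      · exact hb.1 rfl
    · refine ⟨?_, g₂, hg₂, b, hb.2⟩
      rintro rfl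
      cases b
      · exact hb.1 rfl
      · exact hG g₂ hg₂ ⟨w, hb.2, hvf₂⟩

lemma mem_of_not_clauseSat_update {M : ℕ → Bool} {b : Bool} {g : Clause}
    (hM : setSat M ↑(resolveOn v G)) (hg : g ∈ G) (hgs : ¬ clauseSat (update M v b) g) :
    (v, !b) ∈ g ∧ ∀ l ∈ g.erase (v, !b), ¬ litSat M l := by
  have hb : (v, b) ∉ g := fun hb => hgs ⟨(v, b), hb, by exact update_self v b M⟩
  have hne : ∀ l ∈ g, l ≠ (v, !b) → l.1 ≠ v := by
    rintro ⟨w, c⟩ hl hlne rfl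
    cases b <;> cases c <;> simp_all
  have hfalse : ∀ l ∈ g.erase (v, !b), ¬ litSat M l := fun l hl hs => by
    obtain ⟨hlne, hl⟩ := Finset.mem_erase.1 hl
    exact hgs ⟨l, hl, (litSat_update_of_ne (hne l hl hlne)).2 hs⟩
  refine ⟨by_contra fun hnb => ?_, hfalse⟩
  have hgv : g ∈ resolveOn v G := by
    refine mem_resolveOn.2 (Or.inl ⟨hg, ?_⟩)
    cases b <;> exact ⟨‹_›, ‹_›⟩
  obtain ⟨l, hl, hs⟩ := hM g hgv
  exact hfalse l (Finset.mem_erase.2 ⟨fun he => hnb (he ▸ hl), hl⟩) hs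

lemma exists_update_setSat_of_setSat_resolveOn {M : ℕ → Bool}
    (hM : setSat M ↑(resolveOn v G)) : ∃ b, setSat (update M v b) ↑G := by
  by_contra! hcon
  obtain ⟨g₁, hg₁, hs₁⟩ : ∃ g ∈ G, ¬ clauseSat (update M v false) g := by
    simpa [setSat] using hcon false
  obtain ⟨g₂, hg₂, hs₂⟩ : ∃ g ∈ G, ¬ clauseSat (update M v true) g := by
    simpa [setSat] using hcon true
  obtain ⟨hv₁, hf₁⟩ := mem_of_not_clauseSat_update hM hg₁ hs₁
  obtain ⟨hv₂, hf₂⟩ := mem_of_not_clauseSat_update hM hg₂ hs₂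
  set r := g₁.erase (v, true) ∪ g₂.erase (v, false)
  have hr : ¬ clauseSat M r := by
    rintro ⟨l, hl, hs⟩
    rcases Finset.mem_union.1 hl with hl | hl
    · exact hf₁ l hl hs
    · exact hf₂ l hl hs
  have hrv : r ∈ resolveOn v G :=
    mem_resolveOn.2 <|
      Or.inr ⟨⟨g₁, hg₁, g₂, hg₂, hv₁, hv₂, rfl⟩, fun ht => hr (ht.clauseSat M)⟩
  exact hr (hM r hrv)

lemma setEntails_resolveOn {c : Clause} (hv : v ∉ clauseVars c) (hent : setEntails ↑G c) :
    setEntails ↑(resolveOn v G) c := fun _ hM =>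
  let ⟨_, hb⟩ := exists_update_setSat_of_setSat_resolveOn hM
  (clauseSat_update_iff hv).1 (hent _ hb)

theorem exists_deriv_subset_of_setEntails {c : Clause} (hc : ¬ ClTaut c) (G : Cnf)
    (hG : ∀ g ∈ G, ¬ ClTaut g) (hent : setEntails ↑G c) :
    ∃ d, Deriv ↑G d ∧ d ⊆ c := by
  induction hn : (cnfVarFinset G \ clauseVars c).card using Nat.strong_induction_on
    generalizing G with
  | _ n ih =>
  obtain hempty | ⟨v, hv⟩ := (cnfVarFinset G \ clauseVars c).eq_empty_or_nonempty
  · obtain ⟨d, hd, hdc⟩ :=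
      exists_mem_subset_of_setEntails hc (Finset.sdiff_eq_empty_iff_subset.1 hempty) hent
    exact ⟨d, .base hd, hdc⟩
  have hvc := (Finset.mem_sdiff.1 hv).2
  have hlt : (cnfVarFinset (resolveOn v G) \ clauseVars c).card < n := by
    refine hn ▸ Finset.card_lt_card ⟨Finset.sdiff_subset_sdiff
      ((cnfVarFinset_resolveOn_subset hG).trans (Finset.erase_subset _ _)) le_rfl, ?_⟩
    intro hsub
    have := Finset.mem_sdiff.1 (hsub hv)
    exact Finset.notMem_erase v _ (cnfVarFinset_resolveOn_subset hG this.1)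
  obtain ⟨d, hd, hdc⟩ := ih _ hlt (resolveOn v G) (fun _ => not_clTaut_of_mem_resolveOn hG)
    (setEntails_resolveOn hvc hent) rfl
  exact ⟨d, hd.of_subset_resCn fun _ => deriv_of_mem_resolveOn, hdc⟩

end Completeness

lemma subset_of_forall_not_superRedundant {F H : Cnf} (hirr : ∀ c ∈ F, ¬ superRedundant F c)
    (hH : ↑H ⊆ ResCn ↑F) (hent : ∀ c ∈ F, setEntails ↑H c) : F ⊆ H := by
  have hF := not_clTaut_of_not_superRedundant hirr
  intro c hc
  obtain ⟨d, hd, hdc⟩ := exists_deriv_subset_of_setEntails (hF c hc) H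
    (fun h hh => (hH hh).not_clTaut hF) (hent c hc)
  obtain rfl : d = c := by
    by_contra hne
    exact hirr c hc (superRedundant_of_subset (hd.of_subset_resCn hH) hdc hne)
  exact mem_of_deriv_of_not_superRedundant hH hd (hirr d hc)

lemma cnfSize_image_le {G : Cnf} {f : Clause → Clause} (hf : ∀ g ∈ G, f g ⊆ g) :
    cnfSize (G.image f) ≤ cnfSize G :=
  (Finset.sum_image_le_of_nonneg fun _ _ => Nat.zero_le _).trans
    (Finset.sum_le_sum fun g hg => Finset.card_le_card (hf g hg))

theorem stmt11_general (F : Cnf)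
    (hirr : ∀ c ∈ F, ¬ superRedundant F c) :
    ∀ G : Cnf, (∀ c ∈ G, ¬ ClTaut c) → cnfEquiv G F →
      cnfSize F ≤ cnfSize G := by
  classical
  intro G hG hequiv
  have hF := not_clTaut_of_not_superRedundant hirr
  have hFG : ∀ g ∈ G, setEntails ↑F g := fun g hg M hM => (hequiv M).2 hM g hg
  choose! f hfF hfg using fun g hg => exists_deriv_subset_of_setEntails (hG g hg) F hF (hFG g hg)
  have himage_res : ↑(G.image f) ⊆ ResCn ↑F := fun _ hc => by
    obtain ⟨g, hg, rfl⟩ := Finset.mem_image.1 hc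
    exact hfF g hg
  have himage_ent : ∀ c ∈ F, setEntails ↑(G.image f) c := fun c hc M hM =>
    (hequiv M).1 (fun g hg => clauseSat_mono (hfg g hg) (hM _ (Finset.mem_image_of_mem f hg))) c hc
  have hsub : F ⊆ G.image f := subset_of_forall_not_superRedundant hirr himage_res himage_ent
  calc cnfSize F ≤ cnfSize (G.image f) := Finset.sum_le_sum_of_subset hsub
    _ ≤ cnfSize G := cnfSize_image_le hfg

/-- If every clause of `F` is superirredundant then `F` is of minimal size. -/
theorem stmt11 (F : Cnf) (hNT : ∀ c ∈ F, ¬ ClTaut c)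
    (hirr : ∀ c ∈ F, ¬ superRedundant F c) :
    ∀ G : Cnf, (∀ c ∈ G, ¬ ClTaut c) → cnfEquiv G F →
      cnfSize F ≤ cnfSize G :=
  stmt11_general F hirr
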